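/- arXiv:2603.10721 — 2 statements merged into one kernel-verified Lean document; each statement's English description precedes it below -/
import Mathlib

section
/- Let d ≥ 1, let α ∈ [0, 1/2) and ε ∈ (0, 1). Let C̃X̃ and X* be finite nonempty subsets of ℝ^d, let T = X̃ ∩ X*, and assume |T| ≥ (1 − α)·max(|X̃|, |X*|). Let m ∈ ℝ^d be a geometric median of T and let c* ∈ ℝ^d be a geometric median of X*. Let C be a finite nonempty set of points of ℝ^d containing some point q with ‖q − m‖₂ ≤ α·ε·Cost(T, m)/|T|. For each c ∈ C let N(c) ⊆ X̃ be a set of ⌈(1 − α)|X̃|⌉ points of X̃ closest to c, and let ĉ ∈ C minimize Cost(N(c), c) over c ∈ C. Then ‖ĉ − c*‖₂ ≤ (2 + αε)·Cost(X*, c*) / ((1 − 2α)·|X̃|). -/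
open Finset
open scoped Classical

noncomputable def Cost {d : ℕ} (P : Finset (EuclideanSpace ℝ (Fin d)))
    (c : EuclideanSpace ℝ (Fin d)) : ℝ :=
  ∑ p ∈ P, ‖p - c‖

/-!
The cost of `ĉ` is at most that of `q` on its `k = ⌈(1 - α)|X̃|⌉` nearest points, which is
at most `Cost(T, q) ≤ Cost(T, m) + |T| ‖q - m‖ ≤ (1 + αε) Cost(T, m) ≤ (1 + αε) Cost(X*, c*)`,
since `|T| ≥ k` and `m` minimizes the cost of `T ⊆ X*`. On the other hand `S = N(ĉ) ∩ T`
has at least `(1 - 2α)|X̃|` points, as both sets hold at least `(1 - α)|X̃|` points of `X̃`,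
and the triangle inequality through each point of `S` gives
`|S| ‖ĉ - c*‖ ≤ Cost(S, ĉ) + Cost(S, c*) ≤ Cost(N(ĉ), ĉ) + Cost(X*, c*)`.
-/

theorem Finset.sum_le_sum_of_card_eq_of_forall_sdiff_le {ι M : Type*} [AddCommMonoid M]
    [LinearOrder M] [IsOrderedAddMonoid M] [DecidableEq ι] {s t : Finset ι} {f : ι → M}
    (hcard : #s = #t) (h : ∀ i ∈ s \ t, ∀ j ∈ t \ s, f i ≤ f j) :
    ∑ i ∈ s, f i ≤ ∑ i ∈ t, f i := by
  rw [← sum_inter_add_sum_sdiff s t, ← sum_inter_add_sum_sdiff t s, inter_comm t s]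
  refine add_le_add le_rfl ?_
  obtain hst | hst := (s \ t).eq_empty_or_nonempty
  · have hts : t \ s = ∅ := by
      rw [← card_eq_zero, ← card_sdiff_comm hcard, hst, card_empty]
    simp [hst, hts]
  · calc ∑ i ∈ s \ t, f i ≤ #(s \ t) • (s \ t).sup' hst f :=
          sum_le_card_nsmul _ _ _ fun i hi => le_sup' f hi
      _ = #(t \ s) • (s \ t).sup' hst f := by rw [card_sdiff_comm hcard]
      _ ≤ ∑ j ∈ t \ s, f j :=
          card_nsmul_le_sum _ _ _ fun j hj => sup'_le _ _ fun i hi => h i hi j hj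

section Cost

variable {d : ℕ}

theorem cost_mono {P Q : Finset (EuclideanSpace ℝ (Fin d))} (hPQ : P ⊆ Q)
    (c : EuclideanSpace ℝ (Fin d)) : Cost P c ≤ Cost Q c :=
  sum_le_sum_of_subset_of_nonneg hPQ fun _ _ _ => norm_nonneg _

theorem cost_le_cost_add_card_mul_norm_sub (P : Finset (EuclideanSpace ℝ (Fin d)))
    (c c' : EuclideanSpace ℝ (Fin d)) : Cost P c ≤ Cost P c' + #P * ‖c - c'‖ := by
  calc Cost P c ≤ ∑ p ∈ P, (‖p - c'‖ + ‖c - c'‖) := sum_le_sum fun p _ =>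
          (norm_sub_le_norm_sub_add_norm_sub p c' c).trans_eq (by rw [norm_sub_rev c' c])
    _ = Cost P c' + #P * ‖c - c'‖ := by
          rw [sum_add_distrib, sum_const, nsmul_eq_mul]; rfl

theorem card_mul_norm_sub_le_cost_add_cost (P : Finset (EuclideanSpace ℝ (Fin d)))
    (c c' : EuclideanSpace ℝ (Fin d)) : #P * ‖c - c'‖ ≤ Cost P c + Cost P c' := by
  calc (#P : ℝ) * ‖c - c'‖ = ∑ _p ∈ P, ‖c - c'‖ := by rw [sum_const, nsmul_eq_mul]
    _ ≤ ∑ p ∈ P, (‖p - c‖ + ‖p - c'‖) := sum_le_sum fun p _ =>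
          (norm_sub_le_norm_sub_add_norm_sub c p c').trans_eq (by rw [norm_sub_rev c p])
    _ = Cost P c + Cost P c' := sum_add_distrib

theorem cost_le_cost_of_forall_sdiff_norm_le {X N S : Finset (EuclideanSpace ℝ (Fin d))}
    {c : EuclideanSpace ℝ (Fin d)} (hN : ∀ x ∈ N, ∀ y ∈ X \ N, ‖x - c‖ ≤ ‖y - c‖)
    (hSX : S ⊆ X) (hcard : #N ≤ #S) : Cost N c ≤ Cost S c := by
  obtain ⟨S', hS'S, hS'card⟩ := exists_subset_card_eq hcard
  calc Cost N c ≤ Cost S' c :=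
        sum_le_sum_of_card_eq_of_forall_sdiff_le hS'card.symm fun x hx y hy =>
          hN x (mem_sdiff.1 hx).1 y <|
            mem_sdiff.2 ⟨hSX (hS'S (mem_sdiff.1 hy).1), (mem_sdiff.1 hy).2⟩
    _ ≤ Cost S c := cost_mono hS'S c

end Cost

theorem stmt2_general (d : ℕ) (α ε : ℝ)
    (hα0 : 0 ≤ α) (hα : α < 1/2) (hε0 : 0 < ε)
    (Xt Xs : Finset (EuclideanSpace ℝ (Fin d)))
    (hXt : Xt.Nonempty)
    (T : Finset (EuclideanSpace ℝ (Fin d))) (hTdef : T = Xt ∩ Xs)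
    (hTsize : (1 - α) * max (Xt.card : ℝ) (Xs.card : ℝ) ≤ (T.card : ℝ))
    (m cstar : EuclideanSpace ℝ (Fin d))
    (hm : ∀ y, Cost T m ≤ Cost T y)
    (C : Finset (EuclideanSpace ℝ (Fin d)))
    (q : EuclideanSpace ℝ (Fin d)) (hqC : q ∈ C)
    (hq : ‖q - m‖ ≤ α * ε * Cost T m / (T.card : ℝ))
    (N : EuclideanSpace ℝ (Fin d) → Finset (EuclideanSpace ℝ (Fin d)))
    (hNsub : ∀ c ∈ C, N c ⊆ Xt)
    (hNcard : ∀ c ∈ C, (N c).card = ⌈(1 - α) * (Xt.card : ℝ)⌉₊)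
    (hNnear : ∀ c ∈ C, ∀ x ∈ N c, ∀ y ∈ Xt \ N c, ‖x - c‖ ≤ ‖y - c‖)
    (chat : EuclideanSpace ℝ (Fin d)) (hchatC : chat ∈ C)
    (hchat : ∀ c ∈ C, Cost (N chat) chat ≤ Cost (N c) c) :
    ‖chat - cstar‖ ≤ (2 + α * ε) * Cost Xs cstar / ((1 - 2 * α) * (Xt.card : ℝ)) := by
  have hTXt : T ⊆ Xt := hTdef ▸ inter_subset_left
  have hXt_pos : (0 : ℝ) < #Xt := mod_cast hXt.card_pos
  have hT_card : (1 - α) * #Xt ≤ (#T : ℝ) :=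
    (mul_le_mul_of_nonneg_left (le_max_left _ _) (by linarith)).trans hTsize
  have hNchat_card : (1 - α) * #Xt ≤ (#(N chat) : ℝ) := hNcard chat hchatC ▸ Nat.le_ceil _
  have hT_pos : (0 : ℝ) < #T := by nlinarith
  have hTXs : T ⊆ Xs := hTdef ▸ inter_subset_right
  have hTm : Cost T m ≤ Cost Xs cstar := (hm cstar).trans (cost_mono hTXs _)
  have hcost_chat : Cost (N chat) chat ≤ (1 + α * ε) * Cost Xs cstar := calc
    Cost (N chat) chat ≤ Cost (N q) q := hchat q hqC
    _ ≤ Cost T q := cost_le_cost_of_forall_sdiff_norm_le (hNnear q hqC) hTXt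
          (hNcard q hqC ▸ Nat.ceil_le.2 (mod_cast hT_card))
    _ ≤ Cost T m + #T * ‖q - m‖ := cost_le_cost_add_card_mul_norm_sub T q m
    _ ≤ (1 + α * ε) * Cost T m := by nlinarith [(le_div_iff₀ hT_pos).1 hq]
    _ ≤ (1 + α * ε) * Cost Xs cstar := by gcongr
  set S := N chat ∩ T
  have hS_card : (1 - 2 * α) * #Xt ≤ (#S : ℝ) := by
    have hunion : (#(N chat ∪ T) : ℝ) ≤ #Xt :=
      mod_cast card_le_card (union_subset (hNsub chat hchatC) hTXt)
    rw [cast_card_inter]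
    linarith
  have hS_dist : #S * ‖chat - cstar‖ ≤ (2 + α * ε) * Cost Xs cstar := calc
    #S * ‖chat - cstar‖ ≤ Cost S chat + Cost S cstar :=
      card_mul_norm_sub_le_cost_add_cost S _ _
    _ ≤ Cost (N chat) chat + Cost Xs cstar := add_le_add (cost_mono inter_subset_left _)
          (cost_mono (inter_subset_right.trans hTXs) _)
    _ ≤ (2 + α * ε) * Cost Xs cstar := by linarith
  rw [le_div_iff₀ (by nlinarith), mul_comm]
  exact (mul_le_mul_of_nonneg_right hS_card (norm_nonneg _)).trans hS_dist

theorem stmt2 (d : ℕ) (hd : 1 ≤ d) (α ε : ℝ)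
    (hα0 : 0 ≤ α) (hα : α < 1/2) (hε0 : 0 < ε) (hε1 : ε < 1)
    (Xt Xs : Finset (EuclideanSpace ℝ (Fin d)))
    (hXt : Xt.Nonempty) (hXs : Xs.Nonempty)
    (T : Finset (EuclideanSpace ℝ (Fin d))) (hTdef : T = Xt ∩ Xs)
    (hTsize : (1 - α) * max (Xt.card : ℝ) (Xs.card : ℝ) ≤ (T.card : ℝ))
    (m cstar : EuclideanSpace ℝ (Fin d))
    (hm : ∀ y, Cost T m ≤ Cost T y)
    (hcstar : ∀ y, Cost Xs cstar ≤ Cost Xs y)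
    (C : Finset (EuclideanSpace ℝ (Fin d))) (hC : C.Nonempty)
    (q : EuclideanSpace ℝ (Fin d)) (hqC : q ∈ C)
    (hq : ‖q - m‖ ≤ α * ε * Cost T m / (T.card : ℝ))
    (N : EuclideanSpace ℝ (Fin d) → Finset (EuclideanSpace ℝ (Fin d)))
    (hNsub : ∀ c ∈ C, N c ⊆ Xt)
    (hNcard : ∀ c ∈ C, (N c).card = ⌈(1 - α) * (Xt.card : ℝ)⌉₊)
    (hNnear : ∀ c ∈ C, ∀ x ∈ N c, ∀ y ∈ Xt \ N c, ‖x - c‖ ≤ ‖y - c‖)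
    (chat : EuclideanSpace ℝ (Fin d)) (hchatC : chat ∈ C)
    (hchat : ∀ c ∈ C, Cost (N chat) chat ≤ Cost (N c) c) :
    ‖chat - cstar‖ ≤ (2 + α * ε) * Cost Xs cstar / ((1 - 2 * α) * (Xt.card : ℝ)) :=
  stmt2_general d α ε hα0 hα hε0 Xt Xs hXt T hTdef hTsize m cstar hm C q hqC hq N hNsub hNcard
    hNnear chat hchatC hchat
end

section
/- Let d ≥ 1, α ∈ (0, 1), and let X ⊆ ℝ^d be a finite set partitioned as X = A ∪ B with A, B disjoint and A nonempty, such that |B| ≤ α·|X|. Then Cost₂(X, Cen(X)) ≥ Cost₂(A, Cen(A)) + ((1 − α)/α)·|X|·‖Cen(X) − Cen(A)‖₂². -/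
/-!
With `c = Cen X`, the parallel-axis identity `Cost₂(P, c) = Cost₂(P, Cen P) + |P|·‖Cen P − c‖²`
for `P = A` and `P = B` bounds `Cost₂(X, c)` below by
`Cost₂(A, Cen A) + |A|·‖Cen A − c‖² + |B|·‖Cen B − c‖²`. Since `c` is the weighted mean of the two
centroids, `|B|·(Cen B − c) = −|A|·(Cen A − c)`, so the last term is `|A|²/|B|·‖Cen A − c‖²` and the
two between-cluster terms add up to `|A|·|X|/|B|·‖Cen A − c‖²`. Finally `|B| ≤ α|X|` gives
`|A|/|B| ≥ (1 − α)/α`.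
-/

open Finset
open scoped Classical

noncomputable def Cost2 {d : ℕ} (P : Finset (EuclideanSpace ℝ (Fin d)))
    (c : EuclideanSpace ℝ (Fin d)) : ℝ :=
  ∑ p ∈ P, ‖p - c‖ ^ 2

noncomputable def Cen {d : ℕ} (P : Finset (EuclideanSpace ℝ (Fin d))) :
    EuclideanSpace ℝ (Fin d) :=
  ((P.card : ℝ)⁻¹) • ∑ p ∈ P, p

section Centroid

variable {d : ℕ}

lemma card_smul_cen (P : Finset (EuclideanSpace ℝ (Fin d))) :
    (#P : ℝ) • Cen P = ∑ p ∈ P, p := by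
  rcases P.eq_empty_or_nonempty with rfl | hP
  · simp
  · exact smul_inv_smul₀ (by exact_mod_cast hP.card_ne_zero) _

lemma sum_sub_cen_eq_zero (P : Finset (EuclideanSpace ℝ (Fin d))) :
    ∑ p ∈ P, (p - Cen P) = 0 := by
  rw [sum_sub_distrib, sum_const, ← Nat.cast_smul_eq_nsmul ℝ, card_smul_cen, sub_self]

lemma cost2_nonneg (P : Finset (EuclideanSpace ℝ (Fin d))) (c : EuclideanSpace ℝ (Fin d)) :
    0 ≤ Cost2 P c :=
  sum_nonneg fun _ _ => by positivity

lemma cost2_union {A B : Finset (EuclideanSpace ℝ (Fin d))} (hAB : Disjoint A B)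
    (c : EuclideanSpace ℝ (Fin d)) :
    Cost2 (A ∪ B) c = Cost2 A c + Cost2 B c :=
  sum_union hAB

lemma cost2_eq_cost2_cen_add (P : Finset (EuclideanSpace ℝ (Fin d)))
    (c : EuclideanSpace ℝ (Fin d)) :
    Cost2 P c = Cost2 P (Cen P) + #P * ‖Cen P - c‖ ^ 2 := by
  have hsplit : ∀ p ∈ P, ‖p - c‖ ^ 2 =
      ‖p - Cen P‖ ^ 2 + 2 * inner ℝ (p - Cen P) (Cen P - c) + ‖Cen P - c‖ ^ 2 := by
    intro p _
    rw [← norm_add_sq_real, sub_add_sub_cancel]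
  have hcross : ∑ p ∈ P, 2 * inner ℝ (p - Cen P) (Cen P - c) = 0 := by
    rw [← mul_sum, ← sum_inner, sum_sub_cen_eq_zero, inner_zero_left, mul_zero]
  simp only [Cost2, sum_congr rfl hsplit, sum_add_distrib, hcross, sum_const, nsmul_eq_mul,
    add_zero]

lemma card_smul_cen_sub_add_card_smul_cen_sub {A B : Finset (EuclideanSpace ℝ (Fin d))}
    (hAB : Disjoint A B) :
    (#A : ℝ) • (Cen A - Cen (A ∪ B)) + (#B : ℝ) • (Cen B - Cen (A ∪ B)) = 0 := by
  rw [smul_sub, smul_sub, sub_add_sub_comm, ← add_smul, ← Nat.cast_add,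
    ← card_union_of_disjoint hAB, card_smul_cen, card_smul_cen, card_smul_cen, sum_union hAB,
    sub_self]

lemma cost2_cen_union_ge {A B : Finset (EuclideanSpace ℝ (Fin d))} (hAB : Disjoint A B)
    (hB : B.Nonempty) :
    Cost2 A (Cen A) + #A * #(A ∪ B) / #B * ‖Cen (A ∪ B) - Cen A‖ ^ 2 ≤
      Cost2 (A ∪ B) (Cen (A ∪ B)) := by
  set c := Cen (A ∪ B)
  have hb : (0 : ℝ) < #B := by exact_mod_cast hB.card_pos
  have hnorm : (#B : ℝ) * ‖Cen B - c‖ = #A * ‖Cen A - c‖ := by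
    have h := eq_neg_of_add_eq_zero_right (card_smul_cen_sub_add_card_smul_cen_sub hAB)
    simpa only [norm_neg, norm_smul, Real.norm_natCast] using congrArg norm h
  have hBterm : (#B : ℝ) * ‖Cen B - c‖ ^ 2 = #A ^ 2 / #B * ‖Cen A - c‖ ^ 2 := by
    field_simp
    linear_combination (↑(#B) * ‖Cen B - c‖ + ↑(#A) * ‖Cen A - c‖) * hnorm
  calc Cost2 A (Cen A) + #A * #(A ∪ B) / #B * ‖c - Cen A‖ ^ 2
      = Cost2 A (Cen A) + #A * ‖Cen A - c‖ ^ 2 + #B * ‖Cen B - c‖ ^ 2 := by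
        rw [hBterm, card_union_of_disjoint hAB, Nat.cast_add, norm_sub_rev]
        field_simp
        ring
    _ ≤ Cost2 A (Cen A) + #A * ‖Cen A - c‖ ^ 2 +
          (Cost2 B (Cen B) + #B * ‖Cen B - c‖ ^ 2) := by
        linarith [cost2_nonneg B (Cen B)]
    _ = Cost2 (A ∪ B) c := by
        rw [cost2_union hAB, cost2_eq_cost2_cen_add A c, cost2_eq_cost2_cen_add B c]

end Centroid

theorem stmt15_general (d : ℕ) (α : ℝ) (hα0 : 0 < α)
    (X A B : Finset (EuclideanSpace ℝ (Fin d)))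
    (hpart : X = A ∪ B) (hdisj : Disjoint A B)
    (hB : (B.card : ℝ) ≤ α * (X.card : ℝ)) :
    Cost2 X (Cen X) ≥
      Cost2 A (Cen A) + ((1 - α) / α) * (X.card : ℝ) * ‖Cen X - Cen A‖ ^ 2 := by
  subst hpart
  rcases B.eq_empty_or_nonempty with rfl | hBne
  · simp
  have hb : (0 : ℝ) < #B := by exact_mod_cast hBne.card_pos
  have hratio : (1 - α) / α ≤ #A / #B := by
    rw [card_union_of_disjoint hdisj, Nat.cast_add] at hB
    rw [div_le_div_iff₀ hα0 hb]
    linarith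
  calc Cost2 A (Cen A) + (1 - α) / α * #(A ∪ B) * ‖Cen (A ∪ B) - Cen A‖ ^ 2
      ≤ Cost2 A (Cen A) + #A / #B * #(A ∪ B) * ‖Cen (A ∪ B) - Cen A‖ ^ 2 := by gcongr
    _ = Cost2 A (Cen A) + #A * #(A ∪ B) / #B * ‖Cen (A ∪ B) - Cen A‖ ^ 2 := by ring
    _ ≤ Cost2 (A ∪ B) (Cen (A ∪ B)) := cost2_cen_union_ge hdisj hBne

theorem stmt15 (d : ℕ) (hd : 1 ≤ d) (α : ℝ) (hα0 : 0 < α) (hα1 : α < 1)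
    (X A B : Finset (EuclideanSpace ℝ (Fin d)))
    (hpart : X = A ∪ B) (hdisj : Disjoint A B) (hA : A.Nonempty)
    (hB : (B.card : ℝ) ≤ α * (X.card : ℝ)) :
    Cost2 X (Cen X) ≥
      Cost2 A (Cen A) + ((1 - α) / α) * (X.card : ℝ) * ‖Cen X - Cen A‖ ^ 2 :=
  stmt15_general d α hα0 X A B hpart hdisj hB
end
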